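/- Let A and B be types and let f : A^ω → 𝒫(B^ω) be prefix-continuous, prefix-closed, and prefix-compact. If L ⊆ B^ω is a recurrence property, then the universal preimage f_U^{-1}(L) is a recurrence property. -/
import Mathlib


/-- The prefix of length `n` of the infinite word `π`, i.e. the list `[π 0, …, π (n-1)]`. -/
def wordPrefix {A : Type*} (π : ℕ → A) (n : ℕ) : List A := (List.range n).map π

/-- The set of prefixes of length `n` of words in `L`. -/
def prefN {A : Type*} (L : Set (ℕ → A)) (n : ℕ) : Set (List A) :=
  (fun π => wordPrefix π n) '' L

/-- The set of all prefixes of words in `L`. -/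
def prefAll {A : Type*} (L : Set (ℕ → A)) : Set (List A) := ⋃ n, prefN L n

/-- The set of all prefixes of the single word `π`. -/
def prefWord {A : Type*} (π : ℕ → A) : Set (List A) := {w | ∃ n, w = wordPrefix π n}

/-- `f` is prefix-continuous. -/
def PrefixContinuous {A B : Type*} (f : (ℕ → A) → Set (ℕ → B)) : Prop :=
  ∀ (n : ℕ) (π : ℕ → A), ∃ m : ℕ, ∀ π' : ℕ → A,
    wordPrefix π' m = wordPrefix π m → prefN (f π) n = prefN (f π') n

/-- `f` is prefix-closed. -/
def PrefixClosed {A B : Type*} (f : (ℕ → A) → Set (ℕ → B)) : Prop :=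
  ∀ (π : ℕ → A) (σ : ℕ → B), prefWord σ ⊆ prefAll (f π) → σ ∈ f π

/-- `f` is prefix-compact. -/
def PrefixCompact {A B : Type*} (f : (ℕ → A) → Set (ℕ → B)) : Prop :=
  ∀ (n : ℕ) (π : ℕ → A), (prefN (f π) n).Finite

/-- The universal preimage of `S` under `f`. -/
def univPreimage {A B : Type*} (f : (ℕ → A) → Set (ℕ → B)) (S : Set (ℕ → B)) :
    Set (ℕ → A) := {π | f π ⊆ S}

/-- The existential preimage of `S` under `f`. -/
def existPreimage {A B : Type*} (f : (ℕ → A) → Set (ℕ → B)) (S : Set (ℕ → B)) :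
    Set (ℕ → A) := {π | (f π ∩ S).Nonempty}

/-- `L` is a safety property. -/
def IsSafetyProperty {B : Type*} (L : Set (ℕ → B)) : Prop :=
  ∃ Φ : Set (List B), L = {π | ∀ n : ℕ, wordPrefix π n ∈ Φ}

/-- `L` is a guarantee property. -/
def IsGuaranteeProperty {B : Type*} (L : Set (ℕ → B)) : Prop :=
  ∃ Φ : Set (List B), L = {π | ∃ n : ℕ, wordPrefix π n ∈ Φ}

/-- `L` is a recurrence property. -/
def IsRecurrenceProperty {B : Type*} (L : Set (ℕ → B)) : Prop :=
  ∃ Φ : Set (List B), L = {π | {n : ℕ | wordPrefix π n ∈ Φ}.Infinite}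

/-- `L` is a persistence property. -/
def IsPersistenceProperty {B : Type*} (L : Set (ℕ → B)) : Prop :=
  ∃ Φ : Set (List B), L = {π | {n : ℕ | wordPrefix π n ∈ Φ}.Finite}

section Aux
variable {A B : Type*}

lemma wordPrefix_length (π : ℕ → A) (n : ℕ) : (wordPrefix π n).length = n := by
  simp [wordPrefix]

lemma wordPrefix_take (π : ℕ → A) (m n : ℕ) :
    (wordPrefix π n).take m = wordPrefix π (min m n) := by
  simp [wordPrefix, ← List.map_take, List.take_range]

lemma wordPrefix_take_of_le (π : ℕ → A) {m n : ℕ} (h : m ≤ n) :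
    (wordPrefix π n).take m = wordPrefix π m := by
  rw [wordPrefix_take, min_eq_left h]

lemma wordPrefix_agree {π π' : ℕ → A} {m k : ℕ} (h : wordPrefix π' m = wordPrefix π m)
    (hk : k ≤ m) : wordPrefix π' k = wordPrefix π k := by
  rw [← wordPrefix_take_of_le π' hk, ← wordPrefix_take_of_le π hk, h]

lemma wordPrefix_dropLast (π : ℕ → A) (k : ℕ) :
    (wordPrefix π (k + 1)).dropLast = wordPrefix π k := by
  simp [wordPrefix, List.range_succ]

lemma wordPrefix_ne_nil (π : ℕ → A) {k : ℕ} (hk : k ≠ 0) : wordPrefix π k ≠ [] := by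
  intro h
  have := wordPrefix_length π k
  rw [h] at this
  simp at this
  omega

lemma wordPrefix_mem_prefN {f : (ℕ → A) → Set (ℕ → B)} {π : ℕ → A} {σ : ℕ → B}
    (hσ : σ ∈ f π) (m : ℕ) : wordPrefix σ m ∈ prefN (f π) m := ⟨σ, hσ, rfl⟩

end Aux
section Core
variable {A B : Type*} (f : (ℕ → A) → Set (ℕ → B)) (Φ : Set (List B))

/-- Every length-`m` prefix of a word in `f π` has a `Φ`-prefix of length in `(n, m]`. -/
def Pp (π : ℕ → A) (n m : ℕ) : Prop :=
  ∀ w ∈ prefN (f π) m, ∃ j, n < j ∧ j ≤ m ∧ w.take j ∈ Φ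

def gp (π : ℕ → A) (n : ℕ) : Prop := ∃ m, n < m ∧ Pp f Φ π n m

def goodU (u : List A) (n : ℕ) : Prop :=
  ∀ π : ℕ → A, wordPrefix π u.length = u → gp f Φ π n

def Psi : Set (List A) :=
  {u | (∀ n, goodU f Φ u n) ∨
    ∃ n, goodU f Φ u n ∧ u ≠ [] ∧ ¬ goodU f Φ u.dropLast n}

variable {f Φ}

lemma gp_anti {π : ℕ → A} {n n' : ℕ} (h : gp f Φ π n) (hle : n' ≤ n) : gp f Φ π n' := by
  obtain ⟨m, hm, hP⟩ := h
  exact ⟨m, lt_of_le_of_lt hle hm, fun w hw => by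
    obtain ⟨j, h1, h2, h3⟩ := hP w hw
    exact ⟨j, lt_of_le_of_lt hle h1, h2, h3⟩⟩

lemma goodU_self {π : ℕ → A} {k n : ℕ} (h : goodU f Φ (wordPrefix π k) n) : gp f Φ π n := by
  apply h
  rw [wordPrefix_length]

lemma goodU_mono {π : ℕ → A} {k k' n : ℕ} (h : goodU f Φ (wordPrefix π k) n) (hk : k ≤ k') :
    goodU f Φ (wordPrefix π k') n := by
  intro π' hπ'
  rw [wordPrefix_length] at hπ'
  exact h π' (by rw [wordPrefix_length]; exact wordPrefix_agree hπ' hk)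

lemma goodU_anti {u : List A} {n n' : ℕ} (h : goodU f Φ u n) (hle : n' ≤ n) :
    goodU f Φ u n' := fun π hπ => gp_anti (h π hπ) hle

/-- Uniformization via prefix-continuity. -/
lemma exists_goodU (hcont : PrefixContinuous f) {π : ℕ → A} {n : ℕ} (h : gp f Φ π n) :
    ∃ K, goodU f Φ (wordPrefix π K) n := by
  obtain ⟨m, hnm, hP⟩ := h
  obtain ⟨M, hM⟩ := hcont m π
  refine ⟨M, fun π' hπ' => ⟨m, hnm, fun w hw => ?_⟩⟩
  rw [wordPrefix_length] at hπ'
  rw [← hM π' hπ'] at hw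
  exact hP w hw

end Core

section Koenig
variable {A B : Type*} {f : (ℕ → A) → Set (ℕ → B)} {Φ : Set (List B)}

/-- Helper: a decreasing sequence of nonempty subsets of a finite set has a common element. -/
lemma common_mem {α : Type*} {S : Set α} (hS : S.Finite) {R : ℕ → Set α}
    (hsub : ∀ k, R k ⊆ S) (hanti : ∀ k1 k2, k1 ≤ k2 → R k2 ⊆ R k1)
    (hne : ∀ k, (R k).Nonempty) : ∃ w ∈ S, ∀ k, w ∈ R k := by
  by_contra h
  push_neg at h
  classical
  choose F hF using fun w (hw : w ∈ S) => h w hw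
  set M := hS.toFinset.sup (fun w => if hw : w ∈ S then F w hw else 0) with hM
  obtain ⟨w, hw⟩ := hne M
  have hwS : w ∈ S := hsub M hw
  have hle : F w hwS ≤ M := by
    have : w ∈ hS.toFinset := hS.mem_toFinset.mpr hwS
    calc F w hwS = (fun w => if hw : w ∈ S then F w hw else 0) w := by simp [hwS]
    _ ≤ M := Finset.le_sup (f := fun w => if hw : w ∈ S then F w hw else 0) this
  exact hF w hwS (hanti _ _ hle hw)

variable (f Φ) in
/-- Nodes of the "bad" tree: prefixes of words of `f π` with no `Φ`-prefix in `(n, m]`. -/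
def Bad (π : ℕ → A) (n m : ℕ) : Set (List B) :=
  {w ∈ prefN (f π) m | ∀ j, n < j → j ≤ m → w.take j ∉ Φ}

lemma Bad_take {π : ℕ → A} {n m m' : ℕ} (hm : m' ≤ m) {w : List B}
    (hw : w ∈ Bad f Φ π n m) : w.take m' ∈ Bad f Φ π n m' := by
  obtain ⟨⟨σ, hσ, rfl⟩, hbad⟩ := hw
  refine ⟨⟨σ, hσ, (wordPrefix_take_of_le σ hm).symm⟩, fun j h1 h2 => ?_⟩
  rw [wordPrefix_take_of_le σ hm, wordPrefix_take_of_le σ h2,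
    ← wordPrefix_take_of_le σ (le_trans h2 hm)]
  exact hbad j h1 (le_trans h2 hm)

lemma Bad_length {π : ℕ → A} {n m : ℕ} {w : List B} (hw : w ∈ Bad f Φ π n m) :
    w.length = m := by
  obtain ⟨⟨σ, _, rfl⟩, _⟩ := hw
  exact wordPrefix_length σ m

lemma Bad_finite (hcomp : PrefixCompact f) (π : ℕ → A) (n m : ℕ) :
    (Bad f Φ π n m).Finite :=
  (hcomp m π).subset (fun _ hw => hw.1)

/-- Nodes of the bad tree that extend to arbitrary depth. -/
def ExtB (π : ℕ → A) (n m : ℕ) : Set (List B) :=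
  {w ∈ Bad f Φ π n m | ∀ m', m ≤ m' → ∃ w' ∈ Bad f Φ π n m', w'.take m = w}

lemma ExtB_nonempty (hcomp : PrefixCompact f) {π : ℕ → A} {n : ℕ}
    (hne : ∀ m, (Bad f Φ π n m).Nonempty) (m : ℕ) : (ExtB (f := f) (Φ := Φ) π n m).Nonempty := by
  obtain ⟨w, hwB, hw⟩ := common_mem (Bad_finite hcomp π n m)
    (R := fun k => {w ∈ Bad f Φ π n m | ∃ w' ∈ Bad f Φ π n (m + k), w'.take m = w})
    (fun k => Set.sep_subset _ _)
    (by
      rintro k1 k2 hk w ⟨hwB, w', hw', hwt⟩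
      refine ⟨hwB, w'.take (m + k1), Bad_take (by omega) hw', ?_⟩
      rw [List.take_take, min_eq_left (by omega), hwt])
    (by
      intro k
      obtain ⟨w', hw'⟩ := hne (m + k)
      exact ⟨w'.take m, ⟨Bad_take (by omega) hw', w', hw', rfl⟩⟩)
  refine ⟨w, hwB, fun m' hm' => ?_⟩
  obtain ⟨_, w', hw', hwt⟩ := hw (m' - m)
  exact ⟨w', by rwa [Nat.add_sub_cancel' hm'] at hw', hwt⟩

lemma ExtB_step (hcomp : PrefixCompact f) {π : ℕ → A} {n m : ℕ} {w : List B}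
    (hw : w ∈ ExtB (f := f) (Φ := Φ) π n m) :
    ∃ w' ∈ ExtB (f := f) (Φ := Φ) π n (m + 1), w'.take m = w := by
  obtain ⟨hwB, hext⟩ := hw
  obtain ⟨w', hw'B, hw'⟩ := common_mem (Bad_finite hcomp π n (m + 1))
    (R := fun k => {v ∈ Bad f Φ π n (m + 1) | v.take m = w ∧
      ∃ w'' ∈ Bad f Φ π n (m + 1 + k), w''.take (m + 1) = v})
    (fun k => Set.sep_subset _ _)
    (by
      rintro k1 k2 hk v ⟨hvB, hvt, w'', hw'', hwt⟩
      refine ⟨hvB, hvt, w''.take (m + 1 + k1), Bad_take (by omega) hw'', ?_⟩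
      rw [List.take_take, min_eq_left (by omega), hwt])
    (by
      intro k
      obtain ⟨w'', hw'', hwt⟩ := hext (m + 1 + k) (by omega)
      refine ⟨w''.take (m + 1), ⟨Bad_take (by omega) hw'', ?_, w'', hw'', rfl⟩⟩
      rw [List.take_take, min_eq_left (by omega)]
      exact hwt)
  refine ⟨w', ⟨hw'B, fun m' hm' => ?_⟩, (hw' 0).2.1⟩
  obtain ⟨_, _, w'', hw'', hwt⟩ := hw' (m' - (m + 1))
  exact ⟨w'', by rwa [Nat.add_sub_cancel' hm'] at hw'', hwt⟩

/-- The key combinatorial lemma (König): if `f π ⊆ L(Φ)` then `gp` holds at every level. -/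
lemma gp_of_subset (hclosed : PrefixClosed f) (hcomp : PrefixCompact f) {π : ℕ → A}
    (hsub : f π ⊆ {σ | {j : ℕ | wordPrefix σ j ∈ Φ}.Infinite}) (n : ℕ) : gp f Φ π n := by
  by_contra hg
  unfold gp Pp at hg
  push_neg at hg
  have hne : ∀ m, (Bad f Φ π n m).Nonempty := by
    have hbig : ∀ m, n < m → (Bad f Φ π n m).Nonempty := by
      intro m hm
      obtain ⟨w, hw, hbad⟩ := hg m hm
      exact ⟨w, hw, fun j h1 h2 => (hbad j h1 h2)⟩
    intro m
    rcases lt_or_ge n m with h | h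
    · exact hbig m h
    · obtain ⟨w, hw⟩ := hbig (n + 1) (by omega)
      exact ⟨w.take m, Bad_take (by omega) hw⟩
  classical
  -- build an infinite branch through the extendible bad nodes
  have hstep := fun (m : ℕ) (w : List B) (hw : w ∈ ExtB (f := f) (Φ := Φ) π n m) =>
    ExtB_step hcomp hw
  choose nxt hnxt1 hnxt2 using hstep
  obtain ⟨w0, hw0⟩ := ExtB_nonempty hcomp hne 0
  let s : ∀ m : ℕ, {w : List B // w ∈ ExtB (f := f) (Φ := Φ) π n m} :=
    fun m => Nat.rec ⟨w0, hw0⟩ (fun m ih => ⟨nxt m ih.1 ih.2, hnxt1 m ih.1 ih.2⟩) m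
  have hs : ∀ m, ((s (m + 1)).1).take m = (s m).1 := fun m => hnxt2 m (s m).1 (s m).2
  have hsBad : ∀ m, (s m).1 ∈ Bad f Φ π n m := fun m => (s m).2.1
  have hslen : ∀ m, ((s m).1).length = m := fun m => Bad_length (hsBad m)
  have hB : Nonempty B := by
    obtain ⟨w1, hw1⟩ := hne 1
    have h1 : w1.length = 1 := Bad_length hw1
    exact ⟨w1.head (by intro h; rw [h] at h1; simp at h1)⟩
  letI : Inhabited B := ⟨hB.some⟩
  set σ : ℕ → B := fun i => ((s (i + 1)).1).getD i default with hσ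
  have hpre : ∀ m, wordPrefix σ m = (s m).1 := by
    intro m
    induction m with
    | zero =>
      have := hslen 0
      rw [List.length_eq_zero_iff] at this
      simp [wordPrefix, this]
    | succ m ih =>
      have hlt : m < ((s (m + 1)).1).length := by rw [hslen]; omega
      have h1 : wordPrefix σ (m + 1) = wordPrefix σ m ++ [σ m] := by
        simp [wordPrefix, List.range_succ]
      rw [h1, ih, ← hs m, hσ]
      simp only [List.getD_eq_getElem _ _ hlt]
      rw [List.take_concat_get' _ _ hlt]
      exact List.take_of_length_le (by rw [hslen])
  have hσf : σ ∈ f π := by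
    apply hclosed
    rintro w ⟨m, rfl⟩
    exact Set.mem_iUnion.mpr ⟨m, by rw [hpre]; exact (hsBad m).1⟩
  obtain ⟨j, hjΦ, hjn⟩ := (hsub hσf).exists_gt n
  have : ((s j).1).take j ∉ Φ := (hsBad j).2 j hjn le_rfl
  rw [List.take_of_length_le (by rw [hslen]), ← hpre] at this
  exact this hjΦ

end Koenig

section Main
variable {A B : Type*} {f : (ℕ → A) → Set (ℕ → B)} {Φ : Set (List B)}

lemma subset_of_gp {π : ℕ → A} (h : ∀ n, gp f Φ π n) :
    f π ⊆ {σ | {j : ℕ | wordPrefix σ j ∈ Φ}.Infinite} := by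
  intro σ hσ
  apply Set.infinite_of_forall_exists_gt
  intro N
  obtain ⟨m, hNm, hP⟩ := h N
  obtain ⟨j, h1, h2, h3⟩ := hP (wordPrefix σ m) (wordPrefix_mem_prefN hσ m)
  rw [wordPrefix_take_of_le σ h2] at h3
  exact ⟨j, h3, h1⟩

theorem recurrence_closed_under_univPreimage' (f : (ℕ → A) → Set (ℕ → B))
    (hcont : PrefixContinuous f) (hclosed : PrefixClosed f) (hcomp : PrefixCompact f)
    (L : Set (ℕ → B)) (hL : IsRecurrenceProperty L) :
    IsRecurrenceProperty (univPreimage f L) := by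
  classical
  obtain ⟨Φ, rfl⟩ := hL
  refine ⟨Psi f Φ, ?_⟩
  ext π
  simp only [univPreimage, Set.mem_setOf_eq]
  constructor
  · -- forward: f π ⊆ L implies infinitely many prefixes in Psi
    intro hsub
    have hg : ∀ n, gp f Φ π n := gp_of_subset hclosed hcomp hsub
    apply Set.infinite_of_forall_exists_gt
    intro k0
    by_cases hall : ∀ n, goodU f Φ (wordPrefix π k0) n
    · exact ⟨k0 + 1, Or.inl (fun n => goodU_mono (hall n) (by omega)), by omega⟩
    · push_neg at hall
      obtain ⟨n1, hn1⟩ := hall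
      obtain ⟨K, hK⟩ := exists_goodU hcont (hg n1)
      have hex : ∃ k, goodU f Φ (wordPrefix π k) n1 := ⟨K, hK⟩
      set k := Nat.find hex with hk
      have hkgood : goodU f Φ (wordPrefix π k) n1 := Nat.find_spec hex
      have hkmin : ∀ j, j < k → ¬ goodU f Φ (wordPrefix π j) n1 := fun j hj => Nat.find_min hex hj
      have hkk0 : k0 < k := by
        by_contra h
        exact hn1 (goodU_mono hkgood (by omega))
      refine ⟨k, Or.inr ⟨n1, hkgood, wordPrefix_ne_nil π (by omega), ?_⟩, hkk0⟩
      have hk1 : k - 1 + 1 = k := by omega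
      rw [← hk1, wordPrefix_dropLast]
      exact hkmin (k - 1) (by omega)
  · -- backward: infinitely many prefixes in Psi implies f π ⊆ L
    intro hinf
    apply subset_of_gp
    intro N
    by_cases H : ∃ k, ∀ n, goodU f Φ (wordPrefix π k) n
    · obtain ⟨k, hk⟩ := H
      exact goodU_self (hk N)
    · push_neg at H
      by_contra hN
      -- every Psi-prefix has a right-disjunct witness, which must be < N
      have hright : ∀ k ∈ {n | wordPrefix π n ∈ Psi f Φ},
          ∃ n, n < N ∧ goodU f Φ (wordPrefix π k) n ∧
            ¬ goodU f Φ (wordPrefix π k).dropLast n := by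
        intro k hk
        rcases hk with hleft | ⟨n, hgood, hnil, hbad⟩
        · obtain ⟨n, hn⟩ := H k
          exact absurd (hleft n) hn
        · refine ⟨n, ?_, hgood, hbad⟩
          by_contra h
          exact hN (gp_anti (goodU_self hgood) (by omega))
      choose ν hνN hνg hνb using hright
      have key : ∀ (ka kb : ℕ) (hka : ka ∈ {n | wordPrefix π n ∈ Psi f Φ})
          (hkb : kb ∈ {n | wordPrefix π n ∈ Psi f Φ}), ka < kb →
          ν ka hka = ν kb hkb → False := by
        intro ka kb hka hkb hlt heq
        have hb := hνb kb hkb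
        have hdl : (wordPrefix π kb).dropLast = wordPrefix π (kb - 1) := by
          conv_lhs => rw [show kb = (kb - 1) + 1 by omega]
          exact wordPrefix_dropLast π (kb - 1)
        rw [hdl, ← heq] at hb
        exact hb (goodU_mono (hνg ka hka) (by omega))
      obtain ⟨k1, hk1, k2, hk2, hne', heq⟩ :=
        hinf.exists_ne_map_eq_of_mapsTo
          (f := fun k : ℕ => if h : k ∈ {n | wordPrefix π n ∈ Psi f Φ} then ν k h else 0)
          (t := Set.Iio N) (fun k hk => by simp only [Set.mem_Iio, dif_pos hk]; exact hνN k hk)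
          (Set.finite_Iio N)
      rw [dif_pos hk1, dif_pos hk2] at heq
      rcases Ne.lt_or_gt hne' with hlt | hlt
      · exact key k1 k2 hk1 hk2 hlt heq
      · exact key k2 k1 hk2 hk1 hlt heq.symm

end Main

/-- The universal preimage of a recurrence property under a prefix-continuous,
prefix-closed, prefix-compact function is a recurrence property. -/
theorem recurrence_closed_under_univPreimage {A B : Type*} (f : (ℕ → A) → Set (ℕ → B))
    (hcont : PrefixContinuous f) (hclosed : PrefixClosed f) (hcomp : PrefixCompact f)
    (L : Set (ℕ → B)) (hL : IsRecurrenceProperty L) :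
    IsRecurrenceProperty (univPreimage f L) := by
  exact recurrence_closed_under_univPreimage' f hcont hclosed hcomp L hL
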